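/- Let α ≥ 1. If a class C of probability distributions over a countable domain X is η-additive α-robustly learnable for every η ∈ (0,1), then C is additive 3α-robustly learnable. -/

import Mathlib

open scoped BigOperators ENNReal

namespace RobustDistLearn

variable {X : Type*}

/-- `p` is a probability mass function on `X`. -/
def IsPMF (p : X → ℝ) : Prop := (∀ x, 0 ≤ p x) ∧ ∑' x, p x = 1

/-- Total variation distance between two mass functions:
`d_TV(p,q) = (1/2)·∑ₓ |p x − q x|`. -/
noncomputable def dTV (p q : X → ℝ) : ℝ := (1 / 2) * ∑' x, |p x - q x|

/-- The probability, over a sample `S` of `n` i.i.d. draws from `p`, of the event `E`. -/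
noncomputable def iidProb (p : X → ℝ) (n : ℕ) (E : Set (Fin n → X)) : ℝ :=
  ∑' S : Fin n → X, E.indicator (fun T => ∏ i, p (T i)) S

/-- The mixture `η·q + (1−η)·p`. -/
def mix (η : ℝ) (q p : X → ℝ) : X → ℝ := fun x => η * q x + (1 - η) * p x

/-- `inf_{p' ∈ C} d_TV(p, p')`. -/
noncomputable def distToClass (p : X → ℝ) (C : Set (X → ℝ)) : ℝ := sInf (dTV p '' C)

/-- A learner maps, for each sample size `n`, a tuple `S ∈ Xⁿ` to a distribution over `X`. -/
def IsLearner (A : (n : ℕ) → (Fin n → X) → (X → ℝ)) : Prop := ∀ n S, IsPMF (A n S)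

/-- Realizable learnability of a class `C` of distributions. -/
def RealizablyLearnable (C : Set (X → ℝ)) : Prop :=
  ∃ A : (n : ℕ) → (Fin n → X) → (X → ℝ), IsLearner A ∧
    ∃ nC : ℝ → ℝ → ℕ,
      ∀ p ∈ C, ∀ ε ∈ Set.Ioo (0:ℝ) 1, ∀ δ ∈ Set.Ioo (0:ℝ) 1, ∀ n : ℕ, nC ε δ ≤ n →
        1 - δ ≤ iidProb p n {S | dTV (A n S) p ≤ ε}

/-- `α`-robust (agnostic) learnability. -/
def RobustlyLearnable (C : Set (X → ℝ)) (α : ℝ) : Prop :=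
  ∃ A : (n : ℕ) → (Fin n → X) → (X → ℝ), IsLearner A ∧
    ∃ nC : ℝ → ℝ → ℕ,
      ∀ p : X → ℝ, IsPMF p → ∀ ε ∈ Set.Ioo (0:ℝ) 1, ∀ δ ∈ Set.Ioo (0:ℝ) 1, ∀ n : ℕ, nC ε δ ≤ n →
        1 - δ ≤ iidProb p n {S | dTV (A n S) p ≤ α * distToClass p C + ε}

/-- Additive `α`-robust learnability. -/
def AdditiveRobustlyLearnable (C : Set (X → ℝ)) (α : ℝ) : Prop :=
  ∃ A : (n : ℕ) → (Fin n → X) → (X → ℝ), IsLearner A ∧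
    ∃ nC : ℝ → ℝ → ℕ,
      ∀ η ∈ Set.Ioo (0:ℝ) 1, ∀ q : X → ℝ, IsPMF q → ∀ p ∈ C,
        ∀ ε ∈ Set.Ioo (0:ℝ) 1, ∀ δ ∈ Set.Ioo (0:ℝ) 1, ∀ n : ℕ, nC ε δ ≤ n →
          1 - δ ≤ iidProb (mix η q p) n {S | dTV (A n S) (mix η q p) ≤ α * η + ε}

/-- Huber additive `α`-robust learnability: the guarantee is with respect to the clean `p`. -/
def HuberAdditiveRobustlyLearnable (C : Set (X → ℝ)) (α : ℝ) : Prop :=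
  ∃ A : (n : ℕ) → (Fin n → X) → (X → ℝ), IsLearner A ∧
    ∃ nC : ℝ → ℝ → ℕ,
      ∀ η ∈ Set.Ioo (0:ℝ) 1, ∀ q : X → ℝ, IsPMF q → ∀ p ∈ C,
        ∀ ε ∈ Set.Ioo (0:ℝ) 1, ∀ δ ∈ Set.Ioo (0:ℝ) 1, ∀ n : ℕ, nC ε δ ≤ n →
          1 - δ ≤ iidProb (mix η q p) n {S | dTV (A n S) p ≤ α * η + ε}

/-- Subtractive `α`-robust learnability. -/
def SubtractiveRobustlyLearnable (C : Set (X → ℝ)) (α : ℝ) : Prop :=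
  ∃ A : (n : ℕ) → (Fin n → X) → (X → ℝ), IsLearner A ∧
    ∃ nC : ℝ → ℝ → ℕ,
      ∀ η ∈ Set.Ioo (0:ℝ) 1, ∀ p : X → ℝ, IsPMF p →
        (∃ q : X → ℝ, IsPMF q ∧ mix η q p ∈ C) →
        ∀ ε ∈ Set.Ioo (0:ℝ) 1, ∀ δ ∈ Set.Ioo (0:ℝ) 1, ∀ n : ℕ, nC ε δ ≤ n →
          1 - δ ≤ iidProb p n {S | dTV (A n S) p ≤ α * η + ε}

/-- `η`-`α`-robust learnability (known corruption level `η`). -/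
def EtaRobustlyLearnable (C : Set (X → ℝ)) (η α : ℝ) : Prop :=
  ∃ A : (n : ℕ) → (Fin n → X) → (X → ℝ), IsLearner A ∧
    ∃ nC : ℝ → ℝ → ℕ,
      ∀ p : X → ℝ, IsPMF p → distToClass p C ≤ η →
        ∀ ε ∈ Set.Ioo (0:ℝ) 1, ∀ δ ∈ Set.Ioo (0:ℝ) 1, ∀ n : ℕ, nC ε δ ≤ n →
          1 - δ ≤ iidProb p n {S | dTV (A n S) p ≤ α * η + ε}

/-- `η`-additive `α`-robust learnability (known corruption level `η`). -/
def EtaAdditiveRobustlyLearnable (C : Set (X → ℝ)) (η α : ℝ) : Prop :=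
  ∃ A : (n : ℕ) → (Fin n → X) → (X → ℝ), IsLearner A ∧
    ∃ nC : ℝ → ℝ → ℕ,
      ∀ q : X → ℝ, IsPMF q → ∀ p ∈ C,
        ∀ ε ∈ Set.Ioo (0:ℝ) 1, ∀ δ ∈ Set.Ioo (0:ℝ) 1, ∀ n : ℕ, nC ε δ ≤ n →
          1 - δ ≤ iidProb (mix η q p) n {S | dTV (A n S) (mix η q p) ≤ α * η + ε}

/-- `η`-subtractive `α`-robust learnability (known corruption level `η`). -/
def EtaSubtractiveRobustlyLearnable (C : Set (X → ℝ)) (η α : ℝ) : Prop :=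
  ∃ A : (n : ℕ) → (Fin n → X) → (X → ℝ), IsLearner A ∧
    ∃ nC : ℝ → ℝ → ℕ,
      ∀ p : X → ℝ, IsPMF p →
        (∃ q : X → ℝ, IsPMF q ∧ mix η q p ∈ C) →
        ∀ ε ∈ Set.Ioo (0:ℝ) 1, ∀ δ ∈ Set.Ioo (0:ℝ) 1, ∀ n : ℕ, nC ε δ ≤ n →
          1 - δ ≤ iidProb p n {S | dTV (A n S) p ≤ α * η + ε}

/-- The probability of an event under a `PMF`. -/
noncomputable def pmfProb {Y : Type*} (m : PMF Y) (E : Set Y) : ℝ :=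
  (m.toOuterMeasure E).toReal

/-- `(ε,δ)`-differential privacy of a randomized algorithm on inputs of size `n`. -/
def IsDP {Y : Type*} {n : ℕ} (M : (Fin n → X) → PMF Y) (ε δ : ℝ) : Prop :=
  ∀ x x' : Fin n → X, (∃ i : Fin n, ∀ j : Fin n, j ≠ i → x j = x' j) →
    ∀ B : Set Y,
      (M x).toOuterMeasure B ≤
        ENNReal.ofReal (Real.exp ε) * (M x').toOuterMeasure B + ENNReal.ofReal δ

/-- Probability, jointly over `S ~ pⁿ` and the internal randomness of `M`, of the event `E`
on the output of `M`. -/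
noncomputable def randIidProb {Y : Type*} (p : X → ℝ) (n : ℕ)
    (M : (Fin n → X) → PMF Y) (E : Set Y) : ℝ :=
  ∑' S : Fin n → X, (∏ i, p (S i)) * pmfProb (M S) E

/-- Approximate DP learnability. -/
def ApproxDPLearnable (C : Set (X → ℝ)) : Prop :=
  ∃ Alg : (n : ℕ) → (Fin n → X) → PMF (X → ℝ),
    (∀ n S f, f ∈ (Alg n S).support → IsPMF f) ∧
    ∃ nC : ℝ → ℝ → ℝ → ℝ → ℕ,
      ∀ p ∈ C, ∀ α ∈ Set.Ioo (0:ℝ) 1, ∀ β ∈ Set.Ioo (0:ℝ) 1,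
        ∀ ε ∈ Set.Ioo (0:ℝ) 1, ∀ δ ∈ Set.Ioo (0:ℝ) 1, ∀ n : ℕ, nC α β ε δ ≤ n →
          IsDP (Alg n) ε δ ∧
          1 - β ≤ randIidProb p n (Alg n) {f | dTV p f ≤ α}

/-- Pure DP learnability. -/
def PureDPLearnable (C : Set (X → ℝ)) : Prop :=
  ∃ Alg : (n : ℕ) → (Fin n → X) → PMF (X → ℝ),
    (∀ n S f, f ∈ (Alg n S).support → IsPMF f) ∧
    ∃ nC : ℝ → ℝ → ℝ → ℕ,
      ∀ p ∈ C, ∀ α ∈ Set.Ioo (0:ℝ) 1, ∀ β ∈ Set.Ioo (0:ℝ) 1, ∀ ε ∈ Set.Ioo (0:ℝ) 1,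
        ∀ n : ℕ, nC α β ε ≤ n →
          IsDP (Alg n) ε 0 ∧
          1 - β ≤ randIidProb p n (Alg n) {f | dTV p f ≤ α}

/-- `α`-robust learnability by a possibly randomized learner. -/
def RandRobustlyLearnable (C : Set (X → ℝ)) (α : ℝ) : Prop :=
  ∃ Alg : (n : ℕ) → (Fin n → X) → PMF (X → ℝ),
    (∀ n S f, f ∈ (Alg n S).support → IsPMF f) ∧
    ∃ nC : ℝ → ℝ → ℕ,
      ∀ p : X → ℝ, IsPMF p → ∀ ε ∈ Set.Ioo (0:ℝ) 1, ∀ δ ∈ Set.Ioo (0:ℝ) 1,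
        ∀ n : ℕ, nC ε δ ≤ n →
          1 - δ ≤ randIidProb p n (Alg n) {f | dTV f p ≤ α * distToClass p C + ε}

/-- A class `C` admits `(τ, t, nf)` `r`-robust sample compression. -/
def AdmitsCompression (C : Set (X → ℝ)) (τ t nf : ℝ → ℕ) (r : ℝ) : Prop :=
  ∃ J : List X → List Bool → (X → ℝ),
    (∀ L B, J L B ∈ C) ∧
    ∀ q ∈ C, ∀ p : X → ℝ, IsPMF p → dTV p q ≤ r →
      ∀ ε ∈ Set.Ioo (0:ℝ) 1,
        (2 : ℝ) / 3 ≤ iidProb p (nf ε)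
          {S | ∃ L : List X, ∃ B : List Bool,
            L.length ≤ τ ε ∧ (∀ x ∈ L, ∃ i, S i = x) ∧ B.length ≤ t ε ∧
            dTV (J L B) q ≤ r + ε}

/-- The distribution `q_{i,j,k} = (1−1/j)·δ_{(0,0)} + (1/j − 1/k)·U_{A_i×{2j+1}} + (1/k)·δ_{(i,2j+2)}`
over `ℕ × ℕ`, for a given enumeration `A` of the finite nonempty subsets of `ℕ`. -/
noncomputable def qDist (A : ℕ → Finset ℕ) (i j k : ℕ) : ℕ × ℕ → ℝ := fun x =>
  (if x = (0, 0) then 1 - 1 / (j : ℝ) else 0) +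
  (if x.1 ∈ A i ∧ x.2 = 2 * j + 1 then (1 / (j : ℝ) - 1 / (k : ℝ)) / ((A i).card : ℝ) else 0) +
  (if x = (i, 2 * j + 2) then 1 / (k : ℝ) else 0)

/-- The class `Q_g = {q_{i,j,g(j)} : i, j ∈ ℕ, j ≥ 1}`. -/
def Qg (A : ℕ → Finset ℕ) (g : ℕ → ℕ) : Set (ℕ × ℕ → ℝ) :=
  {p | ∃ i j : ℕ, 1 ≤ j ∧ p = qDist A i j (g j)}

/-- The distribution `(1−γ)·δ_{(0,0)} + γ·U_{B×{2j+1}}` over `ℕ × ℕ`. -/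
noncomputable def pDist (γ : ℝ) (B : Finset ℕ) (j : ℕ) : ℕ × ℕ → ℝ := fun x =>
  (if x = (0, 0) then 1 - γ else 0) +
  (if x.1 ∈ B ∧ x.2 = 2 * j + 1 then γ / (B.card : ℝ) else 0)

/-- `g : ℕ → ℕ` is superlinear: `g(t)/t → ∞`. -/
def Superlinear (g : ℕ → ℕ) : Prop :=
  Filter.Tendsto (fun t : ℕ => (g t : ℝ) / (t : ℝ)) Filter.atTop Filter.atTop

/-!
Run the given learners for the grid of corruption levels `r_j = j / 2^k`, `0 < j < 2^k`, with
accuracy `1 / 2^k` and confidence `1 / 4^k`, where `k` is the largest level for which the sample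
suffices. Since a mixture at level `η` is also one at every level `r ≥ η`, a union bound shows that
with probability at least `1 - 1 / 2^k` every grid learner with `r_j ≥ η` succeeds. Output the grid
hypothesis of least index `j` that is within `α (r_j + r_j') + 2 / 2^k` of every hypothesis of larger
index `j'`: the grid point just above `η` qualifies, so the chosen index is no larger, and two
triangle inequalities bound the error by `3 α η + O(1 / 2^k)`. For `η > 1/2` there is nothing to
prove, since `d_TV ≤ 1 < 3 α η`.
-/

abbrev Learner (Y : Type*) := (n : ℕ) → (Fin n → Y) → Y → ℝ

def IsEtaAdditiveLearner (C : Set (X → ℝ)) (η α : ℝ) (A : Learner X) (nC : ℝ → ℝ → ℕ) :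
    Prop :=
  ∀ q : X → ℝ, IsPMF q → ∀ p ∈ C,
    ∀ ε ∈ Set.Ioo (0:ℝ) 1, ∀ δ ∈ Set.Ioo (0:ℝ) 1, ∀ n : ℕ, nC ε δ ≤ n →
      1 - δ ≤ iidProb (mix η q p) n {S | dTV (A n S) (mix η q p) ≤ α * η + ε}

section Distributions

variable {p q r : X → ℝ}

lemma IsPMF.summable (hp : IsPMF p) : Summable p := by
  by_contra h
  simpa [tsum_eq_zero_of_not_summable h] using hp.2

lemma summable_abs_sub (hp : Summable p) (hq : Summable q) : Summable fun x => |p x - q x| :=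
  (hp.abs.add hq.abs).of_nonneg_of_le (fun _ => abs_nonneg _) fun _ => abs_sub _ _

lemma dTV_comm (p q : X → ℝ) : dTV p q = dTV q p := by
  simp only [dTV, abs_sub_comm (p _)]

lemma dTV_triangle (hp : Summable p) (hq : Summable q) (hr : Summable r) :
    dTV p r ≤ dTV p q + dTV q r := by
  unfold dTV
  rw [← mul_add, ← (summable_abs_sub hp hq).tsum_add (summable_abs_sub hq hr)]
  exact mul_le_mul_of_nonneg_left ((summable_abs_sub hp hr).tsum_le_tsum
    (fun _ => abs_sub_le _ _ _) ((summable_abs_sub hp hq).add (summable_abs_sub hq hr)))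
    (by norm_num)

lemma dTV_le_one (hp : IsPMF p) (hq : IsPMF q) : dTV p q ≤ 1 := by
  have hsum : ∑' x, |p x - q x| ≤ ∑' x, (p x + q x) :=
    (summable_abs_sub hp.summable hq.summable).tsum_le_tsum
      (fun x => abs_sub_le_iff.mpr ⟨by linarith [hq.1 x], by linarith [hp.1 x]⟩)
      (hp.summable.add hq.summable)
  rw [hp.summable.tsum_add hq.summable, hp.2, hq.2] at hsum
  unfold dTV
  linarith

lemma isPMF_mix {η : ℝ} (h0 : 0 ≤ η) (h1 : η ≤ 1) (hq : IsPMF q) (hp : IsPMF p) :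
    IsPMF (mix η q p) := by
  refine ⟨fun x => by unfold mix; nlinarith [hq.1 x, hp.1 x], ?_⟩
  unfold mix
  rw [(hq.summable.mul_left _).tsum_add (hp.summable.mul_left _), tsum_mul_left, tsum_mul_left,
    hq.2, hp.2]
  ring

lemma exists_mix_eq_mix_of_le {η r : ℝ} (hη : 0 ≤ η) (hr : 0 < r) (hηr : η ≤ r)
    (hq : IsPMF q) (hp : IsPMF p) : ∃ q' : X → ℝ, IsPMF q' ∧ mix η q p = mix r q' p := by
  refine ⟨fun x => (η * q x + (r - η) * p x) / r, ⟨fun x => ?_, ?_⟩, ?_⟩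
  · exact div_nonneg (by nlinarith [hq.1 x, hp.1 x]) hr.le
  · rw [tsum_div_const, (hq.summable.mul_left _).tsum_add (hp.summable.mul_left _),
      tsum_mul_left, tsum_mul_left, hq.2, hp.2]
    field_simp
    ring
  · funext x
    unfold mix
    field_simp
    ring

end Distributions

section Sampling

variable {p : X → ℝ} {n : ℕ}

lemma hasSum_prod_iid (hp : IsPMF p) (n : ℕ) : HasSum (fun S : Fin n → X => ∏ i, p (S i)) 1 := by
  induction n with
  | zero => simp
  | succ n ih =>
    have hp1 : HasSum p 1 := hp.2 ▸ hp.summable.hasSum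
    have hsum : Summable fun z : X × (Fin n → X) => p z.1 * ∏ i, p (z.2 i) :=
      Summable.mul_of_nonneg (f := p) (g := fun S : Fin n → X => ∏ i, p (S i))
        hp.summable ih.summable hp.1 fun S => Finset.prod_nonneg fun i _ => hp.1 (S i)
    have hprod : HasSum (fun z : X × (Fin n → X) => p z.1 * ∏ i, p (z.2 i)) 1 := by
      simpa only [mul_one] using hp1.mul ih hsum
    have hcomp : (fun S : Fin (n + 1) → X => ∏ i, p (S i)) ∘ Fin.consEquiv (fun _ => X) =
        fun z : X × (Fin n → X) => p z.1 * ∏ i, p (z.2 i) := by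
      funext z
      simp [Fin.consEquiv, Fin.prod_univ_succ]
    exact (Fin.consEquiv fun _ => X).hasSum_iff.mp (hcomp ▸ hprod)

lemma summable_indicator_iid (hp : IsPMF p) (E : Set (Fin n → X)) :
    Summable (E.indicator fun S => ∏ i, p (S i)) :=
  (hasSum_prod_iid hp n).summable.of_nonneg_of_le
    (Set.indicator_nonneg fun S _ => Finset.prod_nonneg fun i _ => hp.1 (S i))
    (Set.indicator_le_self' fun S _ => Finset.prod_nonneg fun i _ => hp.1 (S i))

lemma iidProb_univ (hp : IsPMF p) : iidProb p n Set.univ = 1 := by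
  simpa only [iidProb, Set.indicator_univ] using (hasSum_prod_iid hp n).tsum_eq

lemma iidProb_mono (hp : IsPMF p) {E F : Set (Fin n → X)} (h : E ⊆ F) :
    iidProb p n E ≤ iidProb p n F :=
  (summable_indicator_iid hp E).tsum_le_tsum
    (Set.indicator_le_indicator_of_subset h fun S => Finset.prod_nonneg fun i _ => hp.1 (S i))
    (summable_indicator_iid hp F)

lemma iidProb_add_le_inter_add_one (hp : IsPMF p) (E F : Set (Fin n → X)) :
    iidProb p n E + iidProb p n F ≤ iidProb p n (E ∩ F) + 1 := by
  rw [← iidProb_univ hp, iidProb, iidProb, iidProb, iidProb,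
    ← (summable_indicator_iid hp E).tsum_add (summable_indicator_iid hp F),
    ← (summable_indicator_iid hp _).tsum_add (summable_indicator_iid hp _)]
  refine ((summable_indicator_iid hp E).add (summable_indicator_iid hp F)).tsum_le_tsum
    (fun S => ?_) ((summable_indicator_iid hp _).add (summable_indicator_iid hp _))
  have hw : 0 ≤ ∏ i, p (S i) := Finset.prod_nonneg fun i _ => hp.1 (S i)
  by_cases hE : S ∈ E <;> by_cases hF : S ∈ F <;> simp [Set.indicator, hE, hF, hw]

lemma iidProb_biInter_ge {ι : Type*} (hp : IsPMF p) (J : Finset ι) (E : ι → Set (Fin n → X))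
    {δ : ℝ} (hE : ∀ j ∈ J, 1 - δ ≤ iidProb p n (E j)) :
    1 - J.card * δ ≤ iidProb p n (⋂ j ∈ J, E j) := by
  classical
  induction J using Finset.induction_on with
  | empty => simp [iidProb_univ hp]
  | insert a J ha ih =>
    rw [Finset.set_biInter_insert, Finset.card_insert_of_notMem ha]
    have hrest := ih fun j hj => hE j (Finset.mem_insert_of_mem hj)
    have ha' := hE a (Finset.mem_insert_self a J)
    have hinter := iidProb_add_le_inter_add_one hp (E a) (⋂ j ∈ J, E j)
    push_cast
    linarith

end Sampling

open Filter Topology in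
lemma exists_level {c ε δ : ℝ} (hε : 0 < ε) (hδ : 0 < δ) :
    ∃ k : ℕ, 1 ≤ k ∧ c / 2 ^ k ≤ ε ∧ 1 / 2 ^ k ≤ δ := by
  have h : Tendsto (fun k : ℕ => 1 / (2:ℝ) ^ k) atTop (𝓝 0) := by
    simpa only [one_div_pow] using
      tendsto_pow_atTop_nhds_zero_of_lt_one (by norm_num) (by norm_num : (1 / 2 : ℝ) < 1)
  have hc : Tendsto (fun k : ℕ => c / 2 ^ k) atTop (𝓝 0) := by
    simpa only [mul_one_div, mul_zero] using h.const_mul c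
  exact ((eventually_ge_atTop 1).and ((hc.eventually (gt_mem_nhds hε)).and
    (h.eventually (gt_mem_nhds hδ)))).exists.imp fun _ hk => ⟨hk.1, hk.2.1.le, hk.2.2.le⟩

section Selection

noncomputable def gridPoint (k j : ℕ) : ℝ := j / 2 ^ k

lemma gridPoint_mono {k j j' : ℕ} (h : j ≤ j') : gridPoint k j ≤ gridPoint k j' := by
  unfold gridPoint
  gcongr

lemma gridPoint_mem_Ioo {k j : ℕ} (hj : j ∈ Finset.Ioo 0 (2 ^ k)) :
    gridPoint k j ∈ Set.Ioo (0:ℝ) 1 := by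
  rw [Finset.mem_Ioo] at hj
  have hj0 : (0:ℝ) < j := by exact_mod_cast hj.1
  have hjk : (j:ℝ) < 2 ^ k := by exact_mod_cast hj.2
  exact ⟨by unfold gridPoint; positivity, (div_lt_one (by positivity)).mpr hjk⟩

lemma exists_gridPoint_near {k : ℕ} (hk : 1 ≤ k) {η : ℝ} (h0 : 0 < η) (h1 : η ≤ 1 / 2) :
    ∃ j ∈ Finset.Ioo 0 (2 ^ k), η ≤ gridPoint k j ∧ gridPoint k j ≤ η + 1 / 2 ^ k := by
  have h2k : (2:ℝ) ≤ 2 ^ k := le_self_pow₀ (by norm_num) (by omega)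
  have hceil_le := Nat.le_ceil (η * 2 ^ k)
  have hceil_lt := Nat.ceil_lt_add_one (by positivity : 0 ≤ η * 2 ^ k)
  refine ⟨⌈η * 2 ^ k⌉₊, Finset.mem_Ioo.mpr ⟨Nat.ceil_pos.mpr (by positivity), ?_⟩, ?_, ?_⟩
  · have : (⌈η * 2 ^ k⌉₊ : ℝ) < 2 ^ k := by nlinarith
    exact_mod_cast this
  · rw [gridPoint, le_div_iff₀ (by positivity)]
    exact hceil_le
  · rw [gridPoint, div_le_iff₀ (by positivity), add_mul, one_div_mul_cancel (by positivity)]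
    exact hceil_lt.le

variable {α : ℝ} {k : ℕ} {h : ℕ → X → ℝ} {D : X → ℝ}

/-- `h j` is the hypothesis learnt for corruption level `gridPoint k j`. -/
def IsCertified (α : ℝ) (k : ℕ) (h : ℕ → X → ℝ) (j : ℕ) : Prop :=
  j ∈ Finset.Ioo 0 (2 ^ k) ∧ ∀ j' ∈ Finset.Ioo 0 (2 ^ k), j ≤ j' →
    dTV (h j) (h j') ≤ α * (gridPoint k j + gridPoint k j') + 2 / 2 ^ k

def IsAccurateAbove (α : ℝ) (k : ℕ) (h : ℕ → X → ℝ) (D : X → ℝ) (η : ℝ) : Prop :=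
  ∀ j ∈ Finset.Ioo 0 (2 ^ k), η ≤ gridPoint k j → dTV (h j) D ≤ α * gridPoint k j + 1 / 2 ^ k

open Classical in
noncomputable def gridSelect (α : ℝ) (k : ℕ) (h : ℕ → X → ℝ) : X → ℝ :=
  if H : ∃ j, IsCertified α k h j then h (Nat.find H) else h 0

lemma isPMF_gridSelect (hh : ∀ j, IsPMF (h j)) : IsPMF (gridSelect α k h) := by
  unfold gridSelect
  split <;> apply hh

lemma isCertified_of_dTV_le (hh : ∀ j, Summable (h j)) (hD : Summable D) {η : ℝ} {j₀ : ℕ}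
    (hj₀ : j₀ ∈ Finset.Ioo 0 (2 ^ k)) (hηj₀ : η ≤ gridPoint k j₀)
    (hgood : IsAccurateAbove α k h D η) :
    IsCertified α k h j₀ := by
  refine ⟨hj₀, fun j' hj' hle => ?_⟩
  have h₀ := hgood j₀ hj₀ hηj₀
  have h' := hgood j' hj' (hηj₀.trans (gridPoint_mono hle))
  have htri := dTV_triangle (hh j₀) hD (hh j')
  rw [dTV_comm D] at htri
  have htwo : (2:ℝ) / 2 ^ k = 1 / 2 ^ k + 1 / 2 ^ k := by ring
  linarith

lemma dTV_le_of_isCertified (hα : 0 ≤ α) (hh : ∀ j, Summable (h j)) (hD : Summable D)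
    {j j₀ : ℕ} (hj : IsCertified α k h j) (hj₀ : j₀ ∈ Finset.Ioo 0 (2 ^ k)) (hle : j ≤ j₀)
    (hgood₀ : dTV (h j₀) D ≤ α * gridPoint k j₀ + 1 / 2 ^ k) :
    dTV (h j) D ≤ 3 * α * gridPoint k j₀ + 3 / 2 ^ k := by
  have hcert := hj.2 j₀ hj₀ hle
  have htri := dTV_triangle (hh j) (hh j₀) hD
  have hr := mul_le_mul_of_nonneg_left (gridPoint_mono (k := k) hle) hα
  have hthree : (3:ℝ) / 2 ^ k = 2 / 2 ^ k + 1 / 2 ^ k := by ring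
  linarith

lemma dTV_gridSelect_le (hα : 0 ≤ α) (hh : ∀ j, Summable (h j)) (hD : Summable D)
    (hk : 1 ≤ k) {η : ℝ} (h0 : 0 < η) (h1 : η ≤ 1 / 2)
    (hgood : IsAccurateAbove α k h D η) :
    dTV (gridSelect α k h) D ≤ 3 * α * η + 3 * (α + 1) / 2 ^ k := by
  classical
  obtain ⟨j₀, hj₀, hηj₀, hj₀η⟩ := exists_gridPoint_near hk h0 h1
  have hcert := isCertified_of_dTV_le hh hD hj₀ hηj₀ hgood
  have H : ∃ j, IsCertified α k h j := ⟨j₀, hcert⟩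
  have hsel : gridSelect α k h = h (Nat.find H) := by
    unfold gridSelect
    rw [dif_pos H]
  have hbound := dTV_le_of_isCertified hα hh hD (Nat.find_spec H) hj₀ (Nat.find_min' H hcert)
    (hgood j₀ hj₀ hηj₀)
  have hr := mul_le_mul_of_nonneg_left hj₀η (by positivity : (0:ℝ) ≤ 3 * α)
  have hsplit : 3 * α * (η + 1 / 2 ^ k) + 3 / 2 ^ k = 3 * α * η + 3 * (α + 1) / 2 ^ k := by ring
  rw [hsel]
  linarith

end Selection

section GridLearner

variable (α : ℝ) (A : ℝ → Learner X) (N : ℝ → ℝ → ℝ → ℕ)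

noncomputable def gridSampleSize (k : ℕ) : ℕ :=
  (Finset.Ioo 0 (2 ^ k)).sup fun j => N (gridPoint k j) (1 / 2 ^ k) (1 / 4 ^ k)

open Classical in
noncomputable def gridLevel (n : ℕ) : ℕ :=
  Nat.findGreatest (fun k => gridSampleSize N k ≤ n) n

noncomputable def gridLearner : Learner X := fun n S =>
  gridSelect α (gridLevel N n) fun j => A (gridPoint (gridLevel N n) j) n S

variable {α A N}

lemma gridLearner_isLearner (hA : ∀ r, IsLearner (A r)) : IsLearner (gridLearner α A N) :=
  fun n S => isPMF_gridSelect fun _ => hA _ n S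

variable {C : Set (X → ℝ)} {k n : ℕ} {η : ℝ} {p q : X → ℝ}

lemma iidProb_grid_good (hC : ∀ p ∈ C, IsPMF p)
    (hAN : ∀ r ∈ Set.Ioo (0:ℝ) 1, IsEtaAdditiveLearner C r α (A r) (N r))
    (hk : 1 ≤ k) (hN : gridSampleSize N k ≤ n) (hη : η ∈ Set.Ioo (0:ℝ) 1)
    (hq : IsPMF q) (hp : p ∈ C) :
    1 - 1 / 2 ^ k ≤ iidProb (mix η q p) n
      {S | IsAccurateAbove α k (fun j => A (gridPoint k j) n S) (mix η q p) η} := by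
  have hD : IsPMF (mix η q p) := isPMF_mix hη.1.le hη.2.le hq (hC p hp)
  have h2k : (2:ℝ) ≤ 2 ^ k := le_self_pow₀ (by norm_num) (by omega)
  have h4k : (2:ℝ) ^ k ≤ 4 ^ k := pow_le_pow_left₀ (by norm_num) (by norm_num) k
  set J := (Finset.Ioo 0 (2 ^ k)).filter fun j => η ≤ gridPoint k j
  have hE : ∀ j ∈ J, 1 - 1 / 4 ^ k ≤ iidProb (mix η q p) n
      {S | dTV (A (gridPoint k j) n S) (mix η q p) ≤ α * gridPoint k j + 1 / 2 ^ k} := by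
    intro j hj
    rw [Finset.mem_filter] at hj
    have hr := gridPoint_mem_Ioo hj.1
    obtain ⟨q', hq', hmix⟩ := exists_mix_eq_mix_of_le hη.1.le hr.1 hj.2 hq (hC p hp)
    rw [hmix]
    exact hAN _ hr q' hq' p hp _ ⟨by positivity, by rw [div_lt_one (by positivity)]; linarith⟩
      _ ⟨by positivity, by rw [div_lt_one (by positivity)]; linarith⟩ n
      ((Finset.le_sup hj.1).trans hN)
  have hcard : (J.card : ℝ) * (1 / 4 ^ k) ≤ 1 / 2 ^ k := by
    have hJ : (J.card : ℝ) ≤ 2 ^ k := by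
      exact_mod_cast (Finset.card_filter_le _ _).trans (by simp)
    calc (J.card : ℝ) * (1 / 4 ^ k) ≤ 2 ^ k * (1 / 4 ^ k) := by gcongr
      _ = 1 / 2 ^ k := by rw [show (4:ℝ) = 2 * 2 by norm_num, mul_pow]; field_simp
  calc (1:ℝ) - 1 / 2 ^ k ≤ 1 - J.card * (1 / 4 ^ k) := by linarith
    _ ≤ _ := iidProb_biInter_ge hD J _ hE
    _ ≤ _ := iidProb_mono hD fun S hS j hj hηj =>
        Set.mem_iInter₂.mp hS j (Finset.mem_filter.mpr ⟨hj, hηj⟩)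

lemma iidProb_dTV_gridSelect_le (hα : 1 ≤ α) (hA : ∀ r, IsLearner (A r))
    (hC : ∀ p ∈ C, IsPMF p) (hAN : ∀ r ∈ Set.Ioo (0:ℝ) 1, IsEtaAdditiveLearner C r α (A r) (N r))
    (hk : 1 ≤ k) (hN : gridSampleSize N k ≤ n) (hη : η ∈ Set.Ioo (0:ℝ) 1)
    (hq : IsPMF q) (hp : p ∈ C) :
    1 - 1 / 2 ^ k ≤ iidProb (mix η q p) n {S |
      dTV (gridSelect α k fun j => A (gridPoint k j) n S) (mix η q p) ≤
        3 * α * η + 3 * (α + 1) / 2 ^ k} := by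
  have hD : IsPMF (mix η q p) := isPMF_mix hη.1.le hη.2.le hq (hC p hp)
  by_cases hη' : η ≤ 1 / 2
  · exact (iidProb_grid_good hC hAN hk hN hη hq hp).trans <| iidProb_mono hD fun S hS =>
      dTV_gridSelect_le (by linarith) (fun j => (hA _ n S).summable) hD.summable hk hη.1 hη' hS
  · refine le_trans ?_ ((iidProb_univ hD).ge.trans (iidProb_mono hD fun S _ => ?_))
    · linarith [(by positivity : (0:ℝ) < 1 / 2 ^ k)]
    · refine (dTV_le_one (isPMF_gridSelect fun _ => hA _ n S) hD).trans ?_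
      have hτ : 0 ≤ 3 * (α + 1) / 2 ^ k := by positivity
      nlinarith

lemma iidProb_dTV_gridLearner_le (hα : 1 ≤ α) (hA : ∀ r, IsLearner (A r))
    (hC : ∀ p ∈ C, IsPMF p) (hAN : ∀ r ∈ Set.Ioo (0:ℝ) 1, IsEtaAdditiveLearner C r α (A r) (N r))
    (hk : 1 ≤ k) (hkn : k ≤ n) (hN : gridSampleSize N k ≤ n) (hη : η ∈ Set.Ioo (0:ℝ) 1)
    (hq : IsPMF q) (hp : p ∈ C) :
    1 - 1 / 2 ^ k ≤ iidProb (mix η q p) n {S |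
      dTV (gridLearner α A N n S) (mix η q p) ≤ 3 * α * η + 3 * (α + 1) / 2 ^ k} := by
  have hD : IsPMF (mix η q p) := isPMF_mix hη.1.le hη.2.le hq (hC p hp)
  have hlevel : k ≤ gridLevel N n := Nat.le_findGreatest hkn hN
  have hpow : (2:ℝ) ^ k ≤ 2 ^ gridLevel N n := pow_le_pow_right₀ (by norm_num) hlevel
  have hτ : 3 * (α + 1) / 2 ^ gridLevel N n ≤ 3 * (α + 1) / 2 ^ k :=
    div_le_div_of_nonneg_left (by linarith) (by positivity) hpow
  have hlevelN : gridSampleSize N (gridLevel N n) ≤ n :=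
    Nat.findGreatest_spec (P := fun k => gridSampleSize N k ≤ n) hkn hN
  refine le_trans (by gcongr) <| (iidProb_dTV_gridSelect_le hα hA hC hAN (hk.trans hlevel)
    hlevelN hη hq hp).trans <| iidProb_mono hD fun S hS => ?_
  simp only [Set.mem_ofPred_eq] at hS ⊢
  exact hS.trans (by linarith)

end GridLearner

lemma exists_learner_family {C : Set (X → ℝ)} {α : ℝ}
    (h : ∀ η ∈ Set.Ioo (0:ℝ) 1, EtaAdditiveRobustlyLearnable C η α) :
    ∃ A : ℝ → Learner X, (∀ r, IsLearner (A r)) ∧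
      ∃ N : ℝ → ℝ → ℝ → ℕ, ∀ r ∈ Set.Ioo (0:ℝ) 1, IsEtaAdditiveLearner C r α (A r) (N r) := by
  have : ∀ r : ℝ, ∃ A : Learner X, IsLearner A ∧
      ∃ nC : ℝ → ℝ → ℕ, r ∈ Set.Ioo (0:ℝ) 1 → IsEtaAdditiveLearner C r α A nC := by
    intro r
    by_cases hr : r ∈ Set.Ioo (0:ℝ) 1
    · obtain ⟨A, hA, nC, hnC⟩ := h r hr
      exact ⟨A, hA, nC, fun _ => hnC⟩
    · obtain ⟨A, hA, -⟩ := h (1 / 2) ⟨by norm_num, by norm_num⟩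
      exact ⟨A, hA, fun _ _ => 0, fun hr' => absurd hr' hr⟩
  choose A hA N hN using this
  exact ⟨A, hA, N, hN⟩

theorem eta_additive_all_eta_implies_additive_general {X : Type*}
    (C : Set (X → ℝ)) (hC : ∀ p ∈ C, IsPMF p) (α : ℝ) (hα : 1 ≤ α)
    (h : ∀ η ∈ Set.Ioo (0:ℝ) 1, EtaAdditiveRobustlyLearnable C η α) :
    AdditiveRobustlyLearnable C (3 * α) := by
  obtain ⟨A, hA, N, hAN⟩ := exists_learner_family h
  have hlevel : ∀ ε δ : ℝ, ∃ k : ℕ, 0 < ε → 0 < δ →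
      1 ≤ k ∧ 3 * (α + 1) / 2 ^ k ≤ ε ∧ 1 / 2 ^ k ≤ δ := fun ε δ =>
    if hεδ : 0 < ε ∧ 0 < δ then (exists_level hεδ.1 hεδ.2).imp fun _ hk _ _ => hk
    else ⟨0, fun hε hδ => absurd ⟨hε, hδ⟩ hεδ⟩
  choose k hk using hlevel
  refine ⟨gridLearner α A N, gridLearner_isLearner hA,
    fun ε δ => max (k ε δ) (gridSampleSize N (k ε δ)), fun η hη q hq p hp ε hε δ hδ n hn => ?_⟩
  obtain ⟨hk1, hεk, hδk⟩ := hk ε δ hε.1 hδ.1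
  refine le_trans (by linarith) <| (iidProb_dTV_gridLearner_le hα hA hC hAN hk1
    ((le_max_left _ _).trans hn) ((le_max_right _ _).trans hn) hη hq hp).trans <|
      iidProb_mono (isPMF_mix hη.1.le hη.2.le hq (hC p hp)) fun S hS => ?_
  simp only [Set.mem_ofPred_eq] at hS ⊢
  linarith

/-- if `C` is `η`-additive `α`-robustly learnable for every
`η ∈ (0,1)`, then `C` is additive `3α`-robustly learnable. -/
theorem eta_additive_all_eta_implies_additive {X : Type*} [Countable X]
    (C : Set (X → ℝ)) (hC : ∀ p ∈ C, IsPMF p) (α : ℝ) (hα : 1 ≤ α)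
    (h : ∀ η ∈ Set.Ioo (0:ℝ) 1, EtaAdditiveRobustlyLearnable C η α) :
    AdditiveRobustlyLearnable C (3 * α) :=
  eta_additive_all_eta_implies_additive_general C hC α hα h

end RobustDistLearn
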